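/- arXiv:1505.03424 — 6 statements merged into one kernel-verified Lean document; each statement's English description precedes it below -/
import Mathlib

section
/- Let f : {±1}ⁿ → ℝ be a multilinear polynomial (random variable over uniform x) with E[f] = 0, E[f²] = 1, and E[f⁴] ≤ 15. Then Pr[f(x) ≥ 0] ≥ 0.03. -/
open Finset

/-- The ±1 value associated to a Boolean bit. -/
noncomputable def chi (b : Bool) : ℝ := if b then 1 else -1

/- With `p t` the left-hand side, `1 - p t = 0.002 (t² - 19)² + 0.016 (t - 65/16)² + 0.014`, and
`-p t = 0.002 (t² + 3t)² + 0.012 (-t) (t + 13/4)² + 0.00325 (-t)`. -/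
theorem quartic_le_indicator_nonneg (t : ℝ) :
    0.13 * t + 0.06 * t ^ 2 - 0.002 * t ^ 4 ≤ if 0 ≤ t then 1 else 0 := by
  split_ifs with ht
  · nlinarith [sq_nonneg (t ^ 2 - 19), sq_nonneg (t - 65 / 16)]
  · have hneg : 0 ≤ -t := by linarith
    nlinarith [sq_nonneg (t ^ 2 + 3 * t), mul_nonneg hneg (sq_nonneg (t + 13 / 4))]

theorem moment_combination_le_card_filter_nonneg {α : Type*} (s : Finset α) (g : α → ℝ) :
    0.13 * ∑ x ∈ s, g x + 0.06 * ∑ x ∈ s, g x ^ 2 - 0.002 * ∑ x ∈ s, g x ^ 4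
      ≤ #(s.filter (fun x => 0 ≤ g x)) := by
  rw [Finset.natCast_card_filter, Finset.mul_sum, Finset.mul_sum, Finset.mul_sum,
    ← Finset.sum_add_distrib, ← Finset.sum_sub_distrib]
  exact Finset.sum_le_sum fun x _ => quartic_le_indicator_nonneg (g x)

theorem prob_nonneg_of_moments (n : ℕ) (f : (Fin n → ℝ) → ℝ)
    (h1 : (∑ x : Fin n → Bool, f (fun i => chi (x i))) / 2 ^ n = 0)
    (h2 : (∑ x : Fin n → Bool, (f (fun i => chi (x i))) ^ 2) / 2 ^ n = 1)
    (h4 : (∑ x : Fin n → Bool, (f (fun i => chi (x i))) ^ 4) / 2 ^ n ≤ 15) :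
    ((Finset.univ.filter (fun x : Fin n → Bool => 0 ≤ f (fun i => chi (x i)))).card : ℝ)
      / 2 ^ n ≥ 0.03 := by
  have hpos : (0 : ℝ) < 2 ^ n := by positivity
  rw [div_eq_zero_iff, or_iff_left hpos.ne'] at h1
  rw [div_eq_one_iff_eq hpos.ne'] at h2
  rw [div_le_iff₀ hpos] at h4
  have hcombination := moment_combination_le_card_filter_nonneg univ fun x : Fin n → Bool =>
    f fun i => chi (x i)
  rw [h1, h2] at hcombination
  rw [ge_iff_le, le_div_iff₀ hpos]
  linarith
end

section
/- Let f : {±1}ⁿ → ℝ be a homogeneous multilinear polynomial of degree 2, i.e., f(x) = Σ_{i<j} a_{ij} x_i x_j, with Σ_{i<j} a_{ij}² = 1. Then for x uniform on {±1}ⁿ, E[f(x)⁴] ≤ 15. -/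
open Finset

namespace FM

variable {n : ℕ}

noncomputable def chiS (S : Finset (Fin n)) (x : Fin n → Bool) : ℝ :=
  ∏ m ∈ S, chi (x m)

lemma chiS_mul (S T : Finset (Fin n)) (x : Fin n → Bool) :
    chiS S x * chiS T x = chiS (symmDiff S T) x := by
  unfold chiS
  rw [← Finset.prod_union_inter]
  have h1 : S ∪ T = symmDiff S T ∪ (S ∩ T) := (symmDiff_sup_inf S T).symm
  have hd : Disjoint (symmDiff S T) (S ∩ T) := disjoint_symmDiff_inf S T
  rw [h1, Finset.prod_union hd, mul_assoc, ← Finset.prod_mul_distrib]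
  have : ∀ m ∈ S ∩ T, chi (x m) * chi (x m) = 1 := by
    intro m _; cases x m <;> norm_num [chi]
  rw [Finset.prod_congr rfl this, Finset.prod_const_one, mul_one]

lemma sum_chiS (S : Finset (Fin n)) :
    ∑ x : Fin n → Bool, chiS S x = if S = ∅ then (2:ℝ)^n else 0 := by
  have key : ∀ x : Fin n → Bool, chiS S x = ∏ i : Fin n, (if i ∈ S then chi (x i) else 1) := by
    intro x
    rw [Finset.prod_ite_mem, Finset.univ_inter]
    rfl
  simp_rw [key]
  have swap : ∑ x : Fin n → Bool, ∏ i : Fin n, (if i ∈ S then chi (x i) else 1)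
      = ∏ i : Fin n, ∑ b : Bool, (if i ∈ S then chi b else 1) := by
    rw [Finset.prod_univ_sum, Fintype.piFinset_univ]
  rw [swap]
  have hfac : ∀ i : Fin n, (∑ b : Bool, (if i ∈ S then chi b else 1))
      = if i ∈ S then 0 else 2 := by
    intro i
    split_ifs <;> simp [chi]
  rw [Finset.prod_congr rfl (fun i _ => hfac i)]
  by_cases hS : S = ∅
  · simp [hS]
  · rw [if_neg hS]
    obtain ⟨i, hi⟩ := Finset.nonempty_iff_ne_empty.2 hS
    exact Finset.prod_eq_zero (Finset.mem_univ i) (by simp [hi])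

lemma sum_chiS_mul (S T : Finset (Fin n)) :
    ∑ x : Fin n → Bool, chiS S x * chiS T x = if S = T then (2:ℝ)^n else 0 := by
  simp_rw [chiS_mul, sum_chiS]
  by_cases h : S = T
  · simp [h, symmDiff_self]
  · rw [if_neg h, if_neg]
    intro hc
    exact h (symmDiff_eq_bot.1 (by rw [hc]; rfl))

def pairs (n : ℕ) : Finset (Fin n × Fin n) := (univ ×ˢ univ).filter (fun p => p.1 < p.2)

def Sety (p : Fin n × Fin n) : Finset (Fin n) := {p.1, p.2}

lemma mem_pairs (p : Fin n × Fin n) : p ∈ pairs n ↔ p.1 < p.2 := by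
  simp [pairs]

lemma Sety_inj {p q : Fin n × Fin n} (hp : p ∈ pairs n) (hq : q ∈ pairs n)
    (h : Sety p = Sety q) : p = q := by
  rw [mem_pairs] at hp hq
  rw [Finset.ext_iff] at h
  have h1 := h p.1
  have h2 := h p.2
  have h3 := h q.1
  simp only [Sety, Finset.mem_insert, Finset.mem_singleton, Fin.ext_iff, true_or, or_true,
    true_iff, iff_true] at h1 h2 h3
  rw [Fin.lt_def] at hp hq
  have : p.1 = q.1 ∧ p.2 = q.2 := by
    constructor <;> (rw [Fin.ext_iff]; omega)
  exact Prod.ext this.1 this.2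

lemma card_Sety {p : Fin n × Fin n} (hp : p ∈ pairs n) : (Sety p).card = 2 := by
  rw [mem_pairs] at hp
  exact Finset.card_pair (Fin.ne_of_lt hp)

variable (a : Fin n → Fin n → ℝ)

noncomputable def cc (T : Finset (Fin n)) : ℝ :=
  ∑ e ∈ pairs n, if Sety e = T then a e.1 e.2 else 0

lemma cc_card {T : Finset (Fin n)} (hT : T.card ≠ 2) : cc a T = 0 := by
  apply Finset.sum_eq_zero
  intro e he
  rw [if_neg]
  intro hc
  exact hT (hc ▸ card_Sety he)

lemma cc_Sety {e : Fin n × Fin n} (he : e ∈ pairs n) : cc a (Sety e) = a e.1 e.2 := by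
  rw [cc, Finset.sum_eq_single_of_mem e he]
  · rw [if_pos rfl]
  · intro e' he' hne
    rw [if_neg]
    intro hc
    exact hne (Sety_inj he' he hc)

lemma cc_transport (F : Finset (Fin n) → ℝ) :
    ∑ T : Finset (Fin n), cc a T * F T = ∑ e ∈ pairs n, a e.1 e.2 * F (Sety e) := by
  unfold cc
  simp_rw [Finset.sum_mul, ite_mul, zero_mul]
  rw [Finset.sum_comm]
  apply Finset.sum_congr rfl
  intro e _
  rw [Finset.sum_ite_eq (univ : Finset (Finset (Fin n))) (Sety e) (fun T => a e.1 e.2 * F T)]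
  simp

lemma cc_norm : ∑ T : Finset (Fin n), (cc a T)^2 = ∑ e ∈ pairs n, (a e.1 e.2)^2 := by
  simp_rw [pow_two]
  rw [cc_transport a (cc a)]
  exact Finset.sum_congr rfl (fun e he => by rw [cc_Sety a he])

lemma sum_sq_expand {ι : Type*} (s : Finset ι) (C : ι → ℝ) (Dm : ι → Finset (Fin n)) :
    ∑ x : Fin n → Bool, (∑ i ∈ s, C i * chiS (Dm i) x)^2
      = ∑ i ∈ s, ∑ j ∈ s, C i * C j * (if Dm i = Dm j then (2:ℝ)^n else 0) := by
  have expand : ∀ x : Fin n → Bool, (∑ i ∈ s, C i * chiS (Dm i) x)^2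
      = ∑ i ∈ s, ∑ j ∈ s, C i * C j * (chiS (Dm i) x * chiS (Dm j) x) := by
    intro x
    rw [pow_two, Finset.sum_mul_sum]
    exact Finset.sum_congr rfl fun i _ => Finset.sum_congr rfl fun j _ => by ring
  simp_rw [expand]
  rw [Finset.sum_comm]
  apply Finset.sum_congr rfl
  intro i _
  rw [Finset.sum_comm]
  apply Finset.sum_congr rfl
  intro j _
  rw [← Finset.mul_sum, sum_chiS_mul]

lemma fiber_sq {ι κ : Type*} [Fintype κ] [DecidableEq κ] (s : Finset ι) (C : ι → ℝ)
    (g : ι → κ) (c : ℝ) :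
    ∑ i ∈ s, ∑ j ∈ s, C i * C j * (if g i = g j then c else 0)
      = c * ∑ D : κ, (∑ i ∈ s.filter (fun i => g i = D), C i)^2 := by
  have inner : ∀ i ∈ s, ∑ j ∈ s, C i * C j * (if g i = g j then c else 0)
      = C i * c * ∑ j ∈ s.filter (fun j => g j = g i), C j := by
    intro i _
    rw [Finset.sum_filter, Finset.mul_sum]
    apply Finset.sum_congr rfl
    intro j _
    by_cases h : g j = g i
    · rw [if_pos h, if_pos h.symm]; ring
    · rw [if_neg h, if_neg (fun hc => h hc.symm)]; ring
  rw [Finset.sum_congr rfl inner]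
  rw [← Finset.sum_fiberwise s g (fun i => C i * c * ∑ j ∈ s.filter (fun j => g j = g i), C j)]
  rw [Finset.mul_sum]
  apply Finset.sum_congr rfl
  intro D _
  have : ∀ i ∈ s.filter (fun i => g i = D),
      C i * c * (∑ j ∈ s.filter (fun j => g j = g i), C j)
        = C i * c * ∑ j ∈ s.filter (fun j => g j = D), C j := by
    intro i hi
    rw [(Finset.mem_filter.1 hi).2]
  rw [Finset.sum_congr rfl this, ← Finset.sum_mul, ← Finset.sum_mul]
  ring


variable (a : Fin n → Fin n → ℝ)

noncomputable def gg (D : Finset (Fin n)) : ℝ :=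
  ∑ T : Finset (Fin n), cc a T * cc a (symmDiff T D)

noncomputable def rr (u : Fin n) : ℝ :=
  ∑ T ∈ (univ : Finset (Finset (Fin n))).filter (fun T => u ∈ T), (cc a T)^2

lemma symmDiff_eq_iff' (T U D : Finset (Fin n)) : symmDiff T U = D ↔ U = symmDiff T D := by
  constructor
  · intro h; rw [← h, symmDiff_symmDiff_cancel_left]
  · intro h; rw [h, symmDiff_symmDiff_cancel_left]

lemma gg_fiber (D : Finset (Fin n)) :
    ∑ p ∈ ((univ ×ˢ univ) : Finset (Finset (Fin n) × Finset (Fin n))).filter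
      (fun p => symmDiff p.1 p.2 = D), cc a p.1 * cc a p.2 = gg a D := by
  rw [Finset.sum_filter, Finset.sum_product]
  apply Finset.sum_congr rfl
  intro T _
  have : ∀ U : Finset (Fin n),
      (if symmDiff T U = D then cc a T * cc a U else 0)
        = (if U = symmDiff T D then cc a T * cc a U else 0) := by
    intro U
    by_cases h : symmDiff T U = D
    · rw [if_pos h, if_pos ((symmDiff_eq_iff' T U D).1 h)]
    · rw [if_neg h, if_neg (fun hc => h ((symmDiff_eq_iff' T U D).2 hc))]
  rw [Finset.sum_congr rfl (fun U _ => this U)]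
  rw [Finset.sum_ite_eq' univ (symmDiff T D) (fun U => cc a T * cc a U)]
  simp [gg]

lemma main_identity :
    ∑ x : Fin n → Bool, (∑ T : Finset (Fin n), cc a T * chiS T x)^4
      = 2^n * ∑ D : Finset (Fin n), (gg a D)^2 := by
  have hsq : ∀ x : Fin n → Bool, (∑ T : Finset (Fin n), cc a T * chiS T x)^2
      = ∑ p ∈ ((univ ×ˢ univ) : Finset (Finset (Fin n) × Finset (Fin n))),
          (cc a p.1 * cc a p.2) * chiS (symmDiff p.1 p.2) x := by
    intro x
    rw [pow_two, Finset.sum_mul_sum, Finset.sum_product]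
    apply Finset.sum_congr rfl; intro T _
    apply Finset.sum_congr rfl; intro U _
    rw [← chiS_mul]; ring
  have h4 : ∀ x : Fin n → Bool, (∑ T : Finset (Fin n), cc a T * chiS T x)^4
      = ((∑ T : Finset (Fin n), cc a T * chiS T x)^2)^2 := fun x => by ring
  simp_rw [h4, hsq]
  rw [sum_sq_expand ((univ ×ˢ univ) : Finset (Finset (Fin n) × Finset (Fin n)))
      (fun p => cc a p.1 * cc a p.2) (fun p => symmDiff p.1 p.2)]
  rw [fiber_sq ((univ ×ˢ univ) : Finset (Finset (Fin n) × Finset (Fin n)))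
      (fun p => cc a p.1 * cc a p.2) (fun p => symmDiff p.1 p.2) ((2:ℝ)^n)]
  congr 1
  apply Finset.sum_congr rfl
  intro D _
  rw [gg_fiber]

lemma card_symmDiff' (T U : Finset (Fin n)) :
    (symmDiff T U).card = (T \ U).card + (U \ T).card := by
  rw [symmDiff_def]
  exact Finset.card_union_of_disjoint disjoint_sdiff_sdiff

lemma gg_junk {D : Finset (Fin n)} (h0 : D.card ≠ 0) (h2 : D.card ≠ 2) (h4 : D.card ≠ 4) :
    gg a D = 0 := by
  apply Finset.sum_eq_zero
  intro T _
  by_cases hT : T.card = 2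
  · by_cases hU : (symmDiff T D).card = 2
    · exfalso
      set U := symmDiff T D with hUdef
      have hD : D = symmDiff T U := by rw [hUdef, symmDiff_symmDiff_cancel_left]
      have hcard := card_symmDiff' T U
      have h1 := Finset.card_sdiff_add_card_inter T U
      have h2' := Finset.card_sdiff_add_card_inter U T
      rw [Finset.inter_comm] at h2'
      rw [hD] at h0 h2 h4
      omega
    · rw [cc_card a hU, mul_zero]
  · rw [cc_card a hT, zero_mul]

lemma gg_empty : gg a ∅ = ∑ T : Finset (Fin n), (cc a T)^2 := by
  unfold gg
  apply Finset.sum_congr rfl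
  intro T _
  have h : symmDiff T (∅ : Finset (Fin n)) = T := by
    rw [← Finset.bot_eq_empty]; exact symmDiff_bot T
  rw [h, pow_two]

lemma rr_nonneg (u : Fin n) : 0 ≤ rr a u :=
  Finset.sum_nonneg (fun _ _ => sq_nonneg _)

lemma gg_two {D : Finset (Fin n)} {u v : Fin n} (huv : u ≠ v) (hD : D = {u, v}) :
    (gg a D)^2 ≤ 4 * (rr a u * rr a v) := by
  classical
  subst hD
  set D : Finset (Fin n) := {u, v} with hDdef
  have hcardD : D.card = 2 := Finset.card_pair huv
  set sP := univ.filter (fun T : Finset (Fin n) => u ∈ T ∧ v ∉ T) with hsP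
  set sQ := univ.filter (fun T : Finset (Fin n) => v ∈ T ∧ u ∉ T) with hsQ
  set F : Finset (Fin n) → ℝ := fun T => cc a T * cc a (symmDiff T D) with hF
  -- the split
  have hzero : ∀ T : Finset (Fin n), ¬(u ∈ T ∧ v ∉ T) → ¬(v ∈ T ∧ u ∉ T) → F T = 0 := by
    intro T hP hQ
    by_cases hT : T.card = 2
    · by_cases hu : u ∈ T
      · have hv : v ∈ T := by tauto
        have hsub : D ⊆ T := by
          intro w hw
          rcases Finset.mem_insert.1 hw with h | h
          · exact h ▸ hu
          · exact (Finset.mem_singleton.1 h) ▸ hv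
        have hTD : T = D := (Finset.eq_of_subset_of_card_le hsub (by omega)).symm
        show cc a T * cc a (symmDiff T D) = 0
        have he : symmDiff T D = ∅ := by
          rw [hTD, symmDiff_self, Finset.bot_eq_empty]
        rw [he, cc_card a (T := (∅ : Finset (Fin n))) (by simp), mul_zero]
      · have hv : v ∉ T := by tauto
        have hdisj : Disjoint T D := by
          rw [Finset.disjoint_left]
          intro w hw hwD
          rcases Finset.mem_insert.1 hwD with h | h
          · exact hu (h ▸ hw)
          · exact hv ((Finset.mem_singleton.1 h) ▸ hw)
        have : (symmDiff T D).card = 4 := by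
          rw [hdisj.symmDiff_eq_sup, Finset.sup_eq_union,
            Finset.card_union_of_disjoint hdisj, hT, hcardD]
        show cc a T * cc a (symmDiff T D) = 0
        rw [cc_card a (T := symmDiff T D) (by omega), mul_zero]
    · show cc a T * cc a (symmDiff T D) = 0
      rw [cc_card a hT, zero_mul]
  have hsplit : gg a D = (∑ T ∈ sP, F T) + ∑ T ∈ sQ, F T := by
    have e1 := Finset.sum_filter_add_sum_filter_not (univ : Finset (Finset (Fin n)))
      (fun T => u ∈ T ∧ v ∉ T) F
    have e2 := Finset.sum_filter_add_sum_filter_not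
      ((univ : Finset (Finset (Fin n))).filter (fun T => ¬(u ∈ T ∧ v ∉ T)))
      (fun T => v ∈ T ∧ u ∉ T) F
    have e3 : ((univ : Finset (Finset (Fin n))).filter (fun T => ¬(u ∈ T ∧ v ∉ T))).filter
        (fun T => v ∈ T ∧ u ∉ T) = sQ := by
      rw [Finset.filter_filter, hsQ]
      apply Finset.filter_congr
      intro T _
      constructor
      · tauto
      · intro h; exact ⟨fun hc => h.2 hc.1, h⟩
    have e4 : ∑ T ∈ ((univ : Finset (Finset (Fin n))).filter
        (fun T => ¬(u ∈ T ∧ v ∉ T))).filter (fun T => ¬(v ∈ T ∧ u ∉ T)), F T = 0 := by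
      apply Finset.sum_eq_zero
      intro T hT
      simp only [Finset.mem_filter] at hT
      exact hzero T hT.1.2 hT.2
    rw [gg, ← e1, ← e2, e3, e4, add_zero]
  -- reindex
  have hreindex : ∑ T ∈ sP, (cc a (symmDiff T D))^2 = ∑ T ∈ sQ, (cc a T)^2 := by
    apply Finset.sum_nbij' (fun T => symmDiff T D) (fun T => symmDiff T D)
    · intro T hT
      simp only [hsP, Finset.mem_filter, Finset.mem_univ, true_and] at hT
      simp only [hsQ, Finset.mem_filter, Finset.mem_univ, true_and, Finset.mem_symmDiff]
      constructor
      · right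
        exact ⟨by simp [hDdef], hT.2⟩
      · intro hc
        rcases hc with ⟨h1, h2⟩ | ⟨h1, h2⟩
        · exact h2 (by simp [hDdef])
        · exact h2 hT.1
    · intro T hT
      simp only [hsQ, Finset.mem_filter, Finset.mem_univ, true_and] at hT
      simp only [hsP, Finset.mem_filter, Finset.mem_univ, true_and, Finset.mem_symmDiff]
      constructor
      · right
        exact ⟨by simp [hDdef], hT.2⟩
      · intro hc
        rcases hc with ⟨h1, h2⟩ | ⟨h1, h2⟩
        · exact h2 (by simp [hDdef])
        · exact h2 hT.1
    · intro T _; exact symmDiff_symmDiff_cancel_right D T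
    · intro T _; exact symmDiff_symmDiff_cancel_right D T
    · intro T _; rfl
  have hreindex2 : ∑ T ∈ sQ, (cc a (symmDiff T D))^2 = ∑ T ∈ sP, (cc a T)^2 := by
    apply Finset.sum_nbij' (fun T => symmDiff T D) (fun T => symmDiff T D)
    · intro T hT
      simp only [hsQ, Finset.mem_filter, Finset.mem_univ, true_and] at hT
      simp only [hsP, Finset.mem_filter, Finset.mem_univ, true_and, Finset.mem_symmDiff]
      constructor
      · right
        exact ⟨by simp [hDdef], hT.2⟩
      · intro hc
        rcases hc with ⟨h1, h2⟩ | ⟨h1, h2⟩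
        · exact h2 (by simp [hDdef])
        · exact h2 hT.1
    · intro T hT
      simp only [hsP, Finset.mem_filter, Finset.mem_univ, true_and] at hT
      simp only [hsQ, Finset.mem_filter, Finset.mem_univ, true_and, Finset.mem_symmDiff]
      constructor
      · right
        exact ⟨by simp [hDdef], hT.2⟩
      · intro hc
        rcases hc with ⟨h1, h2⟩ | ⟨h1, h2⟩
        · exact h2 (by simp [hDdef])
        · exact h2 hT.1
    · intro T _; exact symmDiff_symmDiff_cancel_right D T
    · intro T _; exact symmDiff_symmDiff_cancel_right D T
    · intro T _; rfl
  have hsubP : ∑ T ∈ sP, (cc a T)^2 ≤ rr a u := by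
    apply Finset.sum_le_sum_of_subset_of_nonneg
    · intro T hT
      simp only [hsP, Finset.mem_filter, Finset.mem_univ, true_and] at hT
      simp only [rr, Finset.mem_filter, Finset.mem_univ, true_and]
      exact hT.1
    · intro T _ _; exact sq_nonneg _
  have hsubQ : ∑ T ∈ sQ, (cc a T)^2 ≤ rr a v := by
    apply Finset.sum_le_sum_of_subset_of_nonneg
    · intro T hT
      simp only [hsQ, Finset.mem_filter, Finset.mem_univ, true_and] at hT
      simp only [rr, Finset.mem_filter, Finset.mem_univ, true_and]
      exact hT.1
    · intro T _ _; exact sq_nonneg _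
  have hA : (∑ T ∈ sP, F T)^2 ≤ rr a u * rr a v := by
    calc (∑ T ∈ sP, F T)^2
        ≤ (∑ T ∈ sP, (cc a T)^2) * (∑ T ∈ sP, (cc a (symmDiff T D))^2) :=
          Finset.sum_mul_sq_le_sq_mul_sq sP _ _
      _ ≤ rr a u * rr a v := by
          rw [hreindex]
          apply mul_le_mul hsubP hsubQ (Finset.sum_nonneg (fun _ _ => sq_nonneg _)) (rr_nonneg a u)
  have hB : (∑ T ∈ sQ, F T)^2 ≤ rr a v * rr a u := by
    calc (∑ T ∈ sQ, F T)^2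
        ≤ (∑ T ∈ sQ, (cc a T)^2) * (∑ T ∈ sQ, (cc a (symmDiff T D))^2) :=
          Finset.sum_mul_sq_le_sq_mul_sq sQ _ _
      _ ≤ rr a v * rr a u := by
          rw [hreindex2]
          apply mul_le_mul hsubQ hsubP (Finset.sum_nonneg (fun _ _ => sq_nonneg _)) (rr_nonneg a v)
  rw [hsplit]
  nlinarith [sq_nonneg ((∑ T ∈ sP, F T) - (∑ T ∈ sQ, F T)), hA, hB]

lemma gg_four {D : Finset (Fin n)} (hD : D.card = 4) :
    (gg a D)^2 ≤ 6 * ∑ T : Finset (Fin n), (cc a T)^2 * (cc a (symmDiff T D))^2 := by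
  classical
  have hzero : ∀ T ∈ (univ : Finset (Finset (Fin n))), T ∉ D.powersetCard 2 →
      cc a T * cc a (symmDiff T D) = 0 := by
    intro T _ hT
    rw [Finset.mem_powersetCard] at hT
    by_cases hc : T.card = 2
    · have hsub : ¬ T ⊆ D := fun hs => hT ⟨hs, hc⟩
      have h1 : 1 ≤ (T \ D).card := by
        have := (Finset.sdiff_nonempty.2 hsub).card_pos
        omega
      have h2 : 2 ≤ (D \ T).card := by
        have := Finset.le_card_sdiff T D
        omega
      have := card_symmDiff' T D
      rw [cc_card a (T := symmDiff T D) (by omega), mul_zero]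
    · rw [cc_card a hc, zero_mul]
  have hgg : gg a D = ∑ T ∈ D.powersetCard 2, cc a T * cc a (symmDiff T D) :=
    (Finset.sum_subset (Finset.subset_univ _) hzero).symm
  rw [hgg]
  have hcs := sq_sum_le_card_mul_sum_sq
    (s := D.powersetCard 2) (f := fun T => cc a T * cc a (symmDiff T D))
  have hcard : ((D.powersetCard 2).card : ℝ) = 6 := by
    rw [Finset.card_powersetCard, hD]
    norm_num [Nat.choose]
  calc (∑ T ∈ D.powersetCard 2, cc a T * cc a (symmDiff T D))^2
      ≤ ((D.powersetCard 2).card : ℝ)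
          * ∑ T ∈ D.powersetCard 2, (cc a T * cc a (symmDiff T D))^2 := hcs
    _ = 6 * ∑ T ∈ D.powersetCard 2, (cc a T)^2 * (cc a (symmDiff T D))^2 := by
        rw [hcard]
        congr 1
        exact Finset.sum_congr rfl (fun T _ => by ring)
    _ ≤ 6 * ∑ T : Finset (Fin n), (cc a T)^2 * (cc a (symmDiff T D))^2 := by
        apply mul_le_mul_of_nonneg_left _ (by norm_num)
        apply Finset.sum_le_sum_of_subset_of_nonneg (Finset.subset_univ _)
        intro T _ _
        positivity

lemma sum_four :
    ∑ D ∈ (univ : Finset (Finset (Fin n))).filter (fun D => D.card = 4), (gg a D)^2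
      ≤ 6 * (∑ T : Finset (Fin n), (cc a T)^2)^2 := by
  classical
  have step1 : ∑ D ∈ (univ : Finset (Finset (Fin n))).filter (fun D => D.card = 4), (gg a D)^2
      ≤ ∑ D ∈ (univ : Finset (Finset (Fin n))).filter (fun D => D.card = 4),
          6 * ∑ T : Finset (Fin n), (cc a T)^2 * (cc a (symmDiff T D))^2 := by
    apply Finset.sum_le_sum
    intro D hD
    exact gg_four a (Finset.mem_filter.1 hD).2
  have step2 : ∑ D ∈ (univ : Finset (Finset (Fin n))).filter (fun D => D.card = 4),
        6 * ∑ T : Finset (Fin n), (cc a T)^2 * (cc a (symmDiff T D))^2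
      ≤ ∑ D : Finset (Fin n),
          6 * ∑ T : Finset (Fin n), (cc a T)^2 * (cc a (symmDiff T D))^2 := by
    apply Finset.sum_le_sum_of_subset_of_nonneg (Finset.filter_subset _ _)
    intro D _ _
    positivity
  have step3 : ∑ D : Finset (Fin n),
        6 * ∑ T : Finset (Fin n), (cc a T)^2 * (cc a (symmDiff T D))^2
      = 6 * (∑ T : Finset (Fin n), (cc a T)^2)^2 := by
    rw [← Finset.mul_sum]
    congr 1
    rw [Finset.sum_comm]
    have inner : ∀ T : Finset (Fin n),
        ∑ D : Finset (Fin n), (cc a T)^2 * (cc a (symmDiff T D))^2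
          = (cc a T)^2 * ∑ E : Finset (Fin n), (cc a E)^2 := by
      intro T
      rw [← Finset.mul_sum]
      congr 1
      apply Finset.sum_nbij' (fun D => symmDiff T D) (fun E => symmDiff T E)
      · intro D _; exact Finset.mem_univ _
      · intro E _; exact Finset.mem_univ _
      · intro D _; exact symmDiff_symmDiff_cancel_left T D
      · intro E _; exact symmDiff_symmDiff_cancel_left T E
      · intro D _; rfl
    rw [Finset.sum_congr rfl (fun T _ => inner T), ← Finset.sum_mul, pow_two]
  exact le_trans step1 (le_trans step2 (le_of_eq step3))


lemma sum_rr : ∑ u : Fin n, rr a u = 2 * ∑ T : Finset (Fin n), (cc a T)^2 := by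
  unfold rr
  simp_rw [Finset.sum_filter]
  rw [Finset.sum_comm]
  have inner : ∀ T : Finset (Fin n),
      (∑ u : Fin n, if u ∈ T then (cc a T)^2 else 0) = (T.card : ℝ) * (cc a T)^2 := by
    intro T
    rw [Finset.sum_ite_mem, Finset.univ_inter, Finset.sum_const, nsmul_eq_mul]
  rw [Finset.sum_congr rfl (fun T _ => inner T), Finset.mul_sum]
  apply Finset.sum_congr rfl
  intro T _
  by_cases hT : T.card = 2
  · rw [hT]; norm_num
  · rw [cc_card a hT]; ring

lemma sum_two :
    ∑ D ∈ (univ : Finset (Finset (Fin n))).filter (fun D => D.card = 2), (gg a D)^2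
      ≤ 8 * (∑ T : Finset (Fin n), (cc a T)^2)^2 := by
  classical
  have hbound : ∀ D ∈ (univ : Finset (Finset (Fin n))).filter (fun D => D.card = 2),
      (gg a D)^2 ≤ 2 * ∑ z ∈ D.offDiag, rr a z.1 * rr a z.2 := by
    intro D hD
    obtain ⟨u, v, huv, hDuv⟩ := Finset.card_eq_two.1 (Finset.mem_filter.1 hD).2
    have hoff : D.offDiag = ({(u, v), (v, u)} : Finset (Fin n × Fin n)) := by
      ext z
      simp only [Finset.mem_offDiag, hDuv, Finset.mem_insert, Finset.mem_singleton]
      constructor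
      · rintro ⟨h1, h2, h3⟩
        rcases h1 with h1 | h1 <;> rcases h2 with h2 | h2
        · exact absurd (h1.trans h2.symm) h3
        · left; exact Prod.ext h1 h2
        · right; exact Prod.ext h1 h2
        · exact absurd (h1.trans h2.symm) h3
      · rintro (h | h) <;> subst h
        · exact ⟨Or.inl rfl, Or.inr rfl, huv⟩
        · exact ⟨Or.inr rfl, Or.inl rfl, huv.symm⟩
    have hne : ((u, v) : Fin n × Fin n) ≠ (v, u) := by
      simp [Prod.ext_iff]
      intro h; exact absurd h huv
    calc (gg a D)^2 ≤ 4 * (rr a u * rr a v) := gg_two a huv hDuv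
      _ = 2 * (rr a u * rr a v + rr a v * rr a u) := by ring
      _ = 2 * ∑ z ∈ D.offDiag, rr a z.1 * rr a z.2 := by
          rw [hoff, Finset.sum_pair hne]
  have hfib : ∀ D ∈ (univ : Finset (Finset (Fin n))).filter (fun D => D.card = 2),
      D.offDiag = (univ.offDiag : Finset (Fin n × Fin n)).filter
        (fun z => ({z.1, z.2} : Finset (Fin n)) = D) := by
    intro D hD
    have hcard2 : D.card = 2 := (Finset.mem_filter.1 hD).2
    ext z
    simp only [Finset.mem_offDiag, Finset.mem_filter, Finset.mem_univ, true_and]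
    constructor
    · rintro ⟨h1, h2, h3⟩
      refine ⟨h3, ?_⟩
      have hsub : ({z.1, z.2} : Finset (Fin n)) ⊆ D := by
        intro w hw
        rcases Finset.mem_insert.1 hw with h | h
        · exact h ▸ h1
        · exact (Finset.mem_singleton.1 h) ▸ h2
      exact Finset.eq_of_subset_of_card_le hsub (by rw [Finset.card_pair h3]; omega)
    · rintro ⟨h3, heq⟩
      refine ⟨?_, ?_, h3⟩ <;> rw [← heq]
      · exact Finset.mem_insert_self _ _
      · exact Finset.mem_insert.2 (Or.inr (Finset.mem_singleton_self _))
  calc ∑ D ∈ (univ : Finset (Finset (Fin n))).filter (fun D => D.card = 2), (gg a D)^2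
      ≤ ∑ D ∈ (univ : Finset (Finset (Fin n))).filter (fun D => D.card = 2),
          2 * ∑ z ∈ D.offDiag, rr a z.1 * rr a z.2 := Finset.sum_le_sum hbound
    _ = 2 * ∑ D ∈ (univ : Finset (Finset (Fin n))).filter (fun D => D.card = 2),
          ∑ z ∈ D.offDiag, rr a z.1 * rr a z.2 := by rw [Finset.mul_sum]
    _ = 2 * ∑ z ∈ (univ.offDiag : Finset (Fin n × Fin n)), rr a z.1 * rr a z.2 := by
        congr 1
        have hcongr : ∀ D ∈ (univ : Finset (Finset (Fin n))).filter (fun D => D.card = 2),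
            (∑ z ∈ D.offDiag, rr a z.1 * rr a z.2)
              = ∑ z ∈ (univ.offDiag : Finset (Fin n × Fin n)).filter
                  (fun z => ({z.1, z.2} : Finset (Fin n)) = D), rr a z.1 * rr a z.2 :=
          fun D hD => by rw [← hfib D hD]
        rw [Finset.sum_congr rfl hcongr]
        rw [Finset.sum_fiberwise_eq_sum_filter univ.offDiag
          ((univ : Finset (Finset (Fin n))).filter (fun D => D.card = 2))
          (fun z => ({z.1, z.2} : Finset (Fin n))) (fun z => rr a z.1 * rr a z.2)]
        apply Finset.sum_congr _ (fun _ _ => rfl)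
        apply Finset.filter_true_of_mem
        intro z hz
        simp only [Finset.mem_filter, Finset.mem_univ, true_and]
        exact Finset.card_pair (Finset.mem_offDiag.1 hz).2.2
    _ ≤ 2 * ∑ z ∈ (univ ×ˢ univ : Finset (Fin n × Fin n)), rr a z.1 * rr a z.2 := by
        apply mul_le_mul_of_nonneg_left _ (by norm_num)
        apply Finset.sum_le_sum_of_subset_of_nonneg
        · intro z hz
          simp [Finset.mem_product]
        · intro z _ _
          exact mul_nonneg (rr_nonneg a _) (rr_nonneg a _)
    _ = 2 * (∑ u : Fin n, rr a u)^2 := by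
        rw [Finset.sum_product, pow_two]
        rw [← Finset.sum_mul_sum]
    _ = 8 * (∑ T : Finset (Fin n), (cc a T)^2)^2 := by
        rw [sum_rr a]; ring

lemma total (hnorm' : ∑ T : Finset (Fin n), (cc a T)^2 = 1) :
    ∑ D : Finset (Fin n), (gg a D)^2 ≤ 15 := by
  classical
  have h1 := Finset.sum_filter_add_sum_filter_not (univ : Finset (Finset (Fin n)))
    (fun D => D.card = 0) (fun D => (gg a D)^2)
  have h2 := Finset.sum_filter_add_sum_filter_not
    ((univ : Finset (Finset (Fin n))).filter (fun D => ¬D.card = 0))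
    (fun D => D.card = 2) (fun D => (gg a D)^2)
  have h3 := Finset.sum_filter_add_sum_filter_not
    (((univ : Finset (Finset (Fin n))).filter (fun D => ¬D.card = 0)).filter
      (fun D => ¬D.card = 2))
    (fun D => D.card = 4) (fun D => (gg a D)^2)
  have e0 : (univ : Finset (Finset (Fin n))).filter (fun D => D.card = 0) = {∅} := by
    ext D
    simp [Finset.card_eq_zero]
  have s0 : ∑ D ∈ (univ : Finset (Finset (Fin n))).filter (fun D => D.card = 0),
      (gg a D)^2 = 1 := by
    rw [e0, Finset.sum_singleton, gg_empty a, hnorm']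
    norm_num
  have e2 : ((univ : Finset (Finset (Fin n))).filter (fun D => ¬D.card = 0)).filter
      (fun D => D.card = 2) = (univ : Finset (Finset (Fin n))).filter (fun D => D.card = 2) := by
    ext D
    simp only [Finset.mem_filter, Finset.mem_univ, true_and]
    omega
  have e4 : (((univ : Finset (Finset (Fin n))).filter (fun D => ¬D.card = 0)).filter
      (fun D => ¬D.card = 2)).filter (fun D => D.card = 4)
      = (univ : Finset (Finset (Fin n))).filter (fun D => D.card = 4) := by
    ext D
    simp only [Finset.mem_filter, Finset.mem_univ, true_and]
    omega
  have sj : ∑ D ∈ (((univ : Finset (Finset (Fin n))).filter (fun D => ¬D.card = 0)).filter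
      (fun D => ¬D.card = 2)).filter (fun D => ¬D.card = 4), (gg a D)^2 = 0 := by
    apply Finset.sum_eq_zero
    intro D hD
    simp only [Finset.mem_filter] at hD
    rw [gg_junk a hD.1.1.2 hD.1.2 hD.2]
    norm_num
  have hs2 := sum_two a
  have hs4 := sum_four a
  rw [hnorm'] at hs2 hs4
  rw [e2] at h2
  rw [e4] at h3
  rw [one_pow, mul_one] at hs2 hs4
  linarith [h1, h2, h3, s0, sj, hs2, hs4]

lemma nested_eq (t : Fin n → Fin n → ℝ) :
    ∑ i : Fin n, ∑ j ∈ Finset.univ.filter (fun j => i < j), t i j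
      = ∑ e ∈ pairs n, t e.1 e.2 := by
  rw [pairs, Finset.sum_filter, Finset.sum_product]
  apply Finset.sum_congr rfl
  intro i _
  rw [Finset.sum_filter]

end FM

open FM in
theorem fourth_moment_degree_two (n : ℕ) (a : Fin n → Fin n → ℝ)
    (hnorm : ∑ i : Fin n, ∑ j ∈ Finset.univ.filter (fun j => i < j), (a i j) ^ 2 = 1) :
    (∑ x : Fin n → Bool,
        (∑ i : Fin n, ∑ j ∈ Finset.univ.filter (fun j => i < j),
          a i j * chi (x i) * chi (x j)) ^ 4) / 2 ^ n ≤ 15 := by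
  classical
  have hpair : ∑ e ∈ pairs n, (a e.1 e.2)^2 = 1 := by
    rw [← nested_eq (fun i j => (a i j)^2)]
    exact hnorm
  have hcc : ∑ T : Finset (Fin n), (cc a T)^2 = 1 := by
    rw [cc_norm a, hpair]
  have hf : ∀ x : Fin n → Bool,
      (∑ i : Fin n, ∑ j ∈ Finset.univ.filter (fun j => i < j),
        a i j * chi (x i) * chi (x j))
      = ∑ T : Finset (Fin n), cc a T * chiS T x := by
    intro x
    rw [nested_eq (fun i j => a i j * chi (x i) * chi (x j))]
    rw [cc_transport a (fun T => chiS T x)]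
    apply Finset.sum_congr rfl
    intro e he
    have hne : e.1 ≠ e.2 := Fin.ne_of_lt ((mem_pairs e).1 he)
    have : chiS (Sety e) x = chi (x e.1) * chi (x e.2) := by
      rw [chiS, Sety, Finset.prod_pair hne]
    rw [this, ← mul_assoc]
  have hsum : ∑ x : Fin n → Bool,
      (∑ i : Fin n, ∑ j ∈ Finset.univ.filter (fun j => i < j),
        a i j * chi (x i) * chi (x j)) ^ 4
      = 2^n * ∑ D : Finset (Fin n), (gg a D)^2 := by
    rw [Finset.sum_congr rfl (fun x _ => by rw [hf x])]
    exact main_identity a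
  rw [hsum]
  rw [mul_comm, mul_div_assoc, div_self (by positivity : (2:ℝ)^n ≠ 0), mul_one]
  exact total a hcc
end

section
/- Let k be an odd positive integer, η_j = cos(jπ/k), and let c₀,…,c_k be the unique reals with Σ_j c_j η_j^i = [i = 1] for 0 ≤ i ≤ k. Then Σ_{j=0}^k |c_j| = k. -/
/-!
The moment conditions say that `p ↦ ∑ j, c j * p (η j)` is `p ↦ p'(0)` on polynomials of degree
`≤ k`, so `c j` is the coefficient of `X` in the `j`-th Lagrange basis polynomial. The nodes are
symmetric about `0` and there are `k + 1` of them, so the nodal polynomial `W` is even and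
`W'(0) = 0`; then that coefficient is `-W(0) w_j / η_j²`, where the nodal weight `w_j` has sign
`(-1)^j` because the nodes decrease. Hence the `c j` alternate in sign and
`∑ |c j| = |∑ (-1)^j c j| = |T_k'(0)| = k`, as `T_k (η j) = (-1)^j`.
-/

open Finset Real Polynomial

namespace Polynomial

theorem coeff_comp_neg_X {R : Type*} [CommRing R] (p : R[X]) (n : ℕ) :
    (p.comp (-X)).coeff n = (-1) ^ n * p.coeff n := by
  induction p using Polynomial.induction_on' with
  | add p q hp hq => simp [add_comp, hp, hq, mul_add]
  | monomial e a =>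
    rw [← C_mul_X_pow_eq_monomial, mul_comp, C_comp, X_pow_comp, neg_pow, ← mul_assoc,
      ← C_1, ← C_neg, ← C_pow, ← C_mul, coeff_C_mul_X_pow, coeff_C_mul_X_pow]
    split_ifs with h <;> simp [h, mul_comm]

theorem coeff_one_eq_zero_of_comp_neg_X_eq {R : Type*} [CommRing R] [NoZeroDivisors R]
    [CharZero R] {p : R[X]} (hp : p.comp (-X) = p) : p.coeff 1 = 0 := by
  have h := congrArg (coeff · 1) hp
  simp only [coeff_comp_neg_X, pow_one, neg_one_mul] at h
  exact neg_eq_self.mp h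

theorem sq_mul_coeff_one {R : Type*} [CommRing R] (a : R) (q : R[X]) :
    a ^ 2 * q.coeff 1 = -(((X - C a) * q).coeff 0 + a * ((X - C a) * q).coeff 1) := by
  simp only [sub_mul, coeff_sub, coeff_X_mul, coeff_C_mul, mul_coeff_zero, coeff_X_zero,
    coeff_C_zero]
  ring

theorem Chebyshev.coeff_one_T_of_odd (R : Type*) [CommRing R] {n : ℤ} (hn : Odd n) :
    (T R n).coeff 1 = n * ((n - 1) / 2).negOnePow := by
  have h := congrArg (coeff · 0) (T_derivative_eq_U (R := R) n)
  simp only [coeff_derivative, zero_add, Nat.cast_zero, mul_one] at h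
  rw [h, ← C_eq_intCast, coeff_C_mul, coeff_zero_eq_eval_zero,
    U_eval_zero_of_even (R := R) (Int.even_sub_one.mpr (Int.not_even_iff_odd.mpr hn))]

theorem Chebyshev.T_eval_cos_mul_pi_div {k : ℕ} (hk : 0 < k) (j : ℕ) :
    (T ℝ k).eval (cos (j * π / k)) = (-1) ^ j := by
  have hk0 : (k : ℝ) ≠ 0 := by exact_mod_cast hk.ne'
  rw [T_real_cos, Int.cast_natCast, mul_div_cancel₀ _ hk0, cos_nat_mul_pi]

end Polynomial

namespace Lagrange

theorem nodal_comp_neg_X {R ι : Type*} [CommRing R] (s : Finset ι) (v : ι → R) :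
    (nodal s v).comp (-X) = (-1) ^ #s * nodal s (-v) := by
  simp only [nodal, Polynomial.prod_comp, sub_comp, X_comp, C_comp, Pi.neg_apply, C_neg]
  rw [← prod_const, ← prod_mul_distrib]
  exact prod_congr rfl fun i _ => by ring

theorem coeff_one_nodal_eq_zero {R ι : Type*} [CommRing R] [NoZeroDivisors R] [CharZero R]
    [Fintype ι] {v : ι → R} (e : ι ≃ ι) (he : ∀ i, v (e i) = -v i)
    (hι : Even (Fintype.card ι)) : (nodal univ v).coeff 1 = 0 := by
  refine coeff_one_eq_zero_of_comp_neg_X_eq ?_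
  rw [nodal_comp_neg_X, card_univ, hι.neg_one_pow, one_mul, nodal, nodal, ← e.prod_comp]
  simp only [Pi.neg_apply, he, neg_neg]

theorem sq_mul_coeff_one_basis {F ι : Type*} [Field F] [DecidableEq ι] {s : Finset ι}
    {v : ι → F} {i : ι} (hi : i ∈ s) :
    v i ^ 2 * (Lagrange.basis s v i).coeff 1 =
      -(nodalWeight s v i * ((nodal s v).coeff 0 + v i * (nodal s v).coeff 1)) := by
  rw [basis_eq_prod_sub_inv_mul_nodal_div hi, ← nodal_erase_eq_nodal_div hi, coeff_C_mul,
    mul_left_comm, sq_mul_coeff_one, ← nodal_eq_mul_nodal_erase hi, mul_neg]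

theorem neg_one_pow_mul_nodalWeight_pos {F : Type*} [Field F] [LinearOrder F]
    [IsStrictOrderedRing F] {n : ℕ} {v : Fin n → F} (hv : StrictAnti v) (i : Fin n) :
    0 < (-1) ^ (i : ℕ) * nodalWeight univ v i := by
  have hsign : (-1 : F) ^ (i : ℕ) = ∏ j ∈ univ.erase i, if j < i then -1 else 1 := by
    rw [prod_ite, prod_const, prod_const, one_pow, mul_one, ← Fin.card_Iio i]
    congr 2
    ext j
    simpa using ne_of_lt
  rw [hsign, nodalWeight, ← prod_mul_distrib]
  refine prod_pos fun j hj => ?_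
  rcases lt_or_gt_of_ne (mem_erase.mp hj).1 with hji | hij
  · simpa [hji] using hv hji
  · simpa [hij.not_gt] using hv hij

end Lagrange

section Interpolation

theorem sum_mul_eval_eq_coeff_one {R ι : Type*} [CommSemiring R] [Fintype ι] {x c : ι → R}
    {n : ℕ} (hc : ∀ i < n, ∑ j, c j * x j ^ i = if i = 1 then 1 else 0) {p : R[X]}
    (hp : p.natDegree < n) : ∑ j, c j * p.eval (x j) = p.coeff 1 := by
  calc ∑ j, c j * p.eval (x j)
      = ∑ i ∈ range n, p.coeff i * ∑ j, c j * x j ^ i := by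
        simp_rw [eval_eq_sum_range' hp, mul_sum]
        rw [sum_comm]
        exact sum_congr rfl fun i _ => sum_congr rfl fun j _ => by ring
    _ = ∑ i ∈ range n, if i = 1 then p.coeff i else 0 :=
        sum_congr rfl fun i hi => by rw [hc i (mem_range.mp hi), mul_ite, mul_one, mul_zero]
    _ = p.coeff 1 := by
        rw [sum_ite_eq']
        split_ifs with h
        · rfl
        · exact (coeff_eq_zero_of_natDegree_lt (by rw [mem_range] at h; omega)).symm

variable {F : Type*} [Field F]

theorem eq_coeff_one_basis {ι : Type*} [Fintype ι] [DecidableEq ι] {x c : ι → F}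
    (hx : Function.Injective x)
    (hc : ∀ i < Fintype.card ι, ∑ j, c j * x j ^ i = if i = 1 then 1 else 0) (m : ι) :
    c m = (Lagrange.basis univ x m).coeff 1 := by
  have hdeg : (Lagrange.basis univ x m).natDegree < Fintype.card ι := by
    rw [Lagrange.natDegree_basis hx.injOn (mem_univ m), card_univ]
    exact Nat.sub_lt (Fintype.card_pos_iff.mpr ⟨m⟩) one_pos
  rw [← sum_mul_eval_eq_coeff_one hc hdeg, sum_eq_single m]
  · rw [Lagrange.eval_basis_self hx.injOn (mem_univ m), mul_one]
  · intro j _ hjm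
    rw [Lagrange.eval_basis_of_ne hjm.symm (mem_univ j), mul_zero]
  · exact fun h => absurd (mem_univ m) h

theorem sum_abs_eq_abs_sum_mul_neg_one_pow [LinearOrder F] [IsStrictOrderedRing F] {n : ℕ}
    {x c : Fin n → F} (hx : StrictAnti x) (hx0 : ∀ j, x j ≠ 0)
    (hnodal : (Lagrange.nodal univ x).coeff 1 = 0)
    (hc : ∀ i < n, ∑ j, c j * x j ^ i = if i = 1 then 1 else 0) :
    ∑ j, |c j| = |∑ j, c j * (-1) ^ (j : ℕ)| := by
  set a := -(Lagrange.nodal univ x).coeff 0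
  set w : Fin n → F := fun j => (-1) ^ (j : ℕ) * Lagrange.nodalWeight univ x j / x j ^ 2
  have hw_pos : ∀ j, 0 < w j := fun j =>
    div_pos (Lagrange.neg_one_pow_mul_nodalWeight_pos hx j) (pow_two_pos_of_ne_zero (hx0 j))
  have hcw : ∀ j, c j * (-1) ^ (j : ℕ) = a * w j := by
    intro j
    have h := Lagrange.sq_mul_coeff_one_basis (v := x) (mem_univ j)
    rw [hnodal, mul_zero, add_zero,
      ← eq_coeff_one_basis hx.injective (by simpa using hc) j] at h
    have := hx0 j
    simp only [w, a]
    field_simp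
    linear_combination h
  calc ∑ j, |c j| = ∑ j, |a| * w j := by
        refine sum_congr rfl fun j _ => ?_
        rw [← abs_of_pos (hw_pos j), ← abs_mul, ← hcw, abs_mul, abs_pow, abs_neg, abs_one,
          one_pow, mul_one]
    _ = |∑ j, c j * (-1) ^ (j : ℕ)| := by
        rw [← mul_sum, ← abs_of_nonneg (sum_nonneg fun j _ => (hw_pos j).le), ← abs_mul, mul_sum]
        simp only [hcw]

end Interpolation

section ChebyshevNodes

variable {k : ℕ}

theorem strictAnti_cos_mul_pi_div (hk : 0 < k) :
    StrictAnti fun j : Fin (k + 1) => cos (j * π / k) := by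
  have hmem : ∀ j : Fin (k + 1), (j : ℝ) * π / k ∈ Set.Icc 0 π := fun j => by
    refine ⟨by positivity, div_le_of_le_mul₀ (by positivity) pi_pos.le ?_⟩
    rw [mul_comm]
    gcongr
    exact_mod_cast Nat.lt_succ_iff.mp j.isLt
  intro i j hij
  refine strictAntiOn_cos (hmem i) (hmem j) ?_
  gcongr
  exact_mod_cast hij

theorem cos_mul_pi_div_ne_zero (hk : Odd k) (j : ℕ) : cos (j * π / k) ≠ 0 := by
  rw [Ne, cos_eq_zero_iff]
  rintro ⟨m, hm⟩
  have hk0 : (k : ℝ) ≠ 0 := by exact_mod_cast hk.pos.ne'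
  have hreal : (2 * j : ℝ) = (2 * m + 1) * k := by
    field_simp at hm
    nlinarith [pi_pos]
  have hint : (2 * j : ℤ) = (2 * m + 1) * k := by exact_mod_cast hreal
  have hodd : Odd ((2 * m + 1) * (k : ℤ)) := (odd_two_mul_add_one m).mul (by exact_mod_cast hk)
  rw [← hint] at hodd
  exact Int.not_even_iff_odd.mpr hodd (even_two_mul _)

theorem cos_rev_mul_pi_div (hk : 0 < k) (j : Fin (k + 1)) :
    cos (j.rev * π / k) = -cos (j * π / k) := by
  have hk0 : (k : ℝ) ≠ 0 := by exact_mod_cast hk.ne'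
  have : ((j.rev : ℕ) : ℝ) * π / k = π - j * π / k := by
    rw [Fin.val_rev, Nat.add_sub_add_right, Nat.cast_sub (Nat.lt_succ_iff.mp j.isLt)]
    field_simp
  rw [this, cos_pi_sub]

end ChebyshevNodes

open Polynomial.Chebyshev in
theorem chebyshev_coeffs_abs_sum_general (k : ℕ) (hk : Odd k)
    (c : Fin (k + 1) → ℝ)
    (hc : ∀ i : Fin (k + 1),
      ∑ j : Fin (k + 1), c j * (Real.cos (j * Real.pi / k)) ^ (i : ℕ)
        = if (i : ℕ) = 1 then 1 else 0) :
    ∑ j : Fin (k + 1), |c j| = k := by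
  set η : Fin (k + 1) → ℝ := fun j => cos (j * π / k)
  have hmoments : ∀ i < k + 1, ∑ j, c j * η j ^ i = if i = 1 then 1 else 0 :=
    fun i hi => hc ⟨i, hi⟩
  have hnodal : (Lagrange.nodal univ η).coeff 1 = 0 :=
    Lagrange.coeff_one_nodal_eq_zero Fin.revPerm (cos_rev_mul_pi_div hk.pos)
      (by simpa using hk.add_one)
  have halternating : ∑ j, c j * (-1) ^ (j : ℕ) = (T ℝ k).coeff 1 := by
    rw [← sum_mul_eval_eq_coeff_one hmoments (by simp [natDegree_T])]
    simp only [η, T_eval_cos_mul_pi_div hk.pos]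
  rw [sum_abs_eq_abs_sum_mul_neg_one_pow (strictAnti_cos_mul_pi_div hk.pos)
    (fun j => cos_mul_pi_div_ne_zero hk j) hnodal hmoments, halternating,
    coeff_one_T_of_odd ℝ (by exact_mod_cast hk)]
  simp

theorem chebyshev_coeffs_abs_sum (k : ℕ) (hk : Odd k) (hpos : 0 < k)
    (c : Fin (k + 1) → ℝ)
    (hc : ∀ i : Fin (k + 1),
      ∑ j : Fin (k + 1), c j * (Real.cos (j * Real.pi / k)) ^ (i : ℕ)
        = if (i : ℕ) = 1 then 1 else 0) :
    ∑ j : Fin (k + 1), |c j| = k :=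
  chebyshev_coeffs_abs_sum_general k hk c hc
end

section
/- Let k be odd, η_j = cos(jπ/k), and c₀,…,c_k the unique reals with Σ_j c_j η_j^i = [i=1] for 0 ≤ i ≤ k. Then for all reals y₁,…,y_k, z₁,…,z_k: Σ_{j=0}^k c_j ∏_{t=1}^k (η_j·y_t + z_t) = Σ_{t=1}^k y_t ∏_{s ≠ t} z_s. -/
open Finset Real

theorem chebyshev_decoupling_identity (k : ℕ) (hk : Odd k)
    (c : Fin (k + 1) → ℝ)
    (hc : ∀ i : Fin (k + 1),
      ∑ j : Fin (k + 1), c j * (Real.cos (j * Real.pi / k)) ^ (i : ℕ)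
        = if (i : ℕ) = 1 then 1 else 0)
    (y z : Fin k → ℝ) :
    ∑ j : Fin (k + 1), c j * ∏ t : Fin k, (Real.cos (j * Real.pi / k) * y t + z t)
      = ∑ t : Fin k, y t * ∏ s ∈ Finset.univ.erase t, z s := by
  have key : ∀ j : Fin (k+1),
      c j * ∏ t : Fin k, (Real.cos (j * Real.pi / k) * y t + z t)
      = ∑ S ∈ (Finset.univ : Finset (Fin k)).powerset,
          c j * (Real.cos (j * Real.pi / k)) ^ S.card *
            ((∏ t ∈ S, y t) * ∏ t ∈ Finset.univ \ S, z t) := by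
    intro j
    rw [Finset.prod_add, Finset.mul_sum]
    refine Finset.sum_congr rfl fun S _ => ?_
    rw [Finset.prod_mul_distrib, Finset.prod_const]
    ring
  simp only [key]
  rw [Finset.sum_comm]
  have key2 : ∀ S ∈ (Finset.univ : Finset (Fin k)).powerset,
      (∑ j : Fin (k+1), c j * (Real.cos (j * Real.pi / k)) ^ S.card *
        ((∏ t ∈ S, y t) * ∏ t ∈ Finset.univ \ S, z t))
      = (if S.card = 1 then 1 else 0) * ((∏ t ∈ S, y t) * ∏ t ∈ Finset.univ \ S, z t) := by
    intro S hS
    rw [← Finset.sum_mul]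
    congr 1
    have hcard : S.card < k + 1 :=
      Nat.lt_succ_of_le (le_trans (Finset.card_le_card (Finset.mem_powerset.mp hS))
        (by simp [Finset.card_univ]))
    have := hc ⟨S.card, hcard⟩
    simpa using this
  rw [Finset.sum_congr rfl key2]
  simp only [ite_mul, one_mul, zero_mul]
  rw [Finset.sum_ite, Finset.sum_const_zero, add_zero, ← Finset.powersetCard_eq_filter,
    Finset.powersetCard_one, Finset.sum_map]
  refine Finset.sum_congr rfl fun t _ => ?_
  simp [Finset.sdiff_singleton_eq_erase]
end

section
/- Let a_{ijk} (for distinct i,j,k ∈ [n]) be reals symmetric in their indices, and define P(x) = Σ_{i,j,k distinct} a_{ijk} x_i x_j x_k. Fix y, z ∈ {±1}ⁿ. Let x be random: with probability 4/9, each x_i independently equals y_i or z_i with probability 1/2 each; with probability 4/9, each x_i independently equals y_i or −z_i with probability 1/2 each; with probability 1/9, x = −y. Then E[P(x)] = (1/3)·Σ_{i,j,k} a_{ijk} y_i z_j z_k. -/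
open Finset

lemma key_sum {n : ℕ} (y w : Fin n → ℝ) (i j k : Fin n)
    (hij : i ≠ j) (hik : i ≠ k) (hjk : j ≠ k) :
    ∑ b : Fin n → Bool,
      (if b i then y i else w i) * (if b j then y j else w j) * (if b k then y k else w k)
    = 2 ^ n / 8 * ((y i + w i) * (y j + w j) * (y k + w k)) := by
  classical
  have hcard : ({i, j, k} : Finset (Fin n)).card = 3 := by
    rw [Finset.card_insert_of_notMem (by simp [hij, hik]),
      Finset.card_insert_of_notMem (by simp [hjk]), Finset.card_singleton]
  have h3 : 3 ≤ n := by
    have := Finset.card_le_univ ({i, j, k} : Finset (Fin n))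
    simpa [hcard] using this
  set h : Fin n → Bool → ℝ := fun t u =>
    if t = i then (if u then y i else w i)
    else if t = j then (if u then y j else w j)
    else if t = k then (if u then y k else w k) else 1 with hh
  have hb : ∀ b : Fin n → Bool,
      (if b i then y i else w i) * (if b j then y j else w j) * (if b k then y k else w k)
      = ∏ t, h t (b t) := by
    intro b
    rw [← Finset.prod_subset (Finset.subset_univ ({i, j, k} : Finset (Fin n)))
      (by intro t _ ht; simp only [Finset.mem_insert, Finset.mem_singleton, not_or] at ht
          simp [hh, ht.1, ht.2.1, ht.2.2])]
    rw [Finset.prod_insert (by simp [hij, hik]), Finset.prod_insert (by simp [hjk]),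
      Finset.prod_singleton]
    simp [hh, hij, hjk, Ne.symm hij, Ne.symm hik, Ne.symm hjk, mul_assoc]
  calc ∑ b : Fin n → Bool,
      (if b i then y i else w i) * (if b j then y j else w j) * (if b k then y k else w k)
      = ∑ b : Fin n → Bool, ∏ t, h t (b t) := Finset.sum_congr rfl fun b _ => hb b
    _ = ∏ t, ∑ u : Bool, h t u := by
        rw [Finset.prod_univ_sum, Fintype.piFinset_univ]
    _ = 2 ^ n / 8 * ((y i + w i) * (y j + w j) * (y k + w k)) := by
        rw [← Finset.prod_sdiff (Finset.subset_univ ({i, j, k} : Finset (Fin n)))]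
        have h1 : ∏ t ∈ (Finset.univ \ {i, j, k}), ∑ u : Bool, h t u = 2 ^ (n - 3) := by
          rw [Finset.prod_congr rfl (fun t ht => ?_)]
          · rw [Finset.prod_const]
            congr 1
            rw [Finset.card_sdiff_of_subset (Finset.subset_univ _), hcard, Finset.card_univ, Fintype.card_fin]
          · simp only [Finset.mem_sdiff, Finset.mem_insert, Finset.mem_singleton, not_or] at ht
            simp [hh, ht.2.1, ht.2.2.1, ht.2.2.2]
        have h2 : ∏ t ∈ ({i, j, k} : Finset (Fin n)), ∑ u : Bool, h t u
            = (y i + w i) * ((y j + w j) * (y k + w k)) := by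
          rw [Finset.prod_insert (by simp [hij, hik]), Finset.prod_insert (by simp [hjk]),
            Finset.prod_singleton]
          simp [hh, hij, hjk, Ne.symm hij, Ne.symm hik, Ne.symm hjk]
        rw [h1, h2]
        have : (2 : ℝ) ^ (n - 3) = 2 ^ n / 8 := by
          rw [eq_div_iff (by norm_num : (8:ℝ) ≠ 0)]
          rw [show (8:ℝ) = 2 ^ 3 by norm_num, ← pow_add]
          congr 1
          omega
        rw [this]; ring

theorem decoupling_rounding_degree_three (n : ℕ) (a : Fin n → Fin n → Fin n → ℝ)
    (hsym1 : ∀ i j k, a i j k = a j i k)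
    (hsym2 : ∀ i j k, a i j k = a i k j)
    (P : (Fin n → ℝ) → ℝ)
    (hP : ∀ x, P x = ∑ i : Fin n, ∑ j : Fin n, ∑ k : Fin n,
      if i ≠ j ∧ i ≠ k ∧ j ≠ k then a i j k * x i * x j * x k else 0)
    (y z : Fin n → ℝ)
    (hy : ∀ i, y i = 1 ∨ y i = -1) (hz : ∀ i, z i = 1 ∨ z i = -1) :
    (4 / 9) * (∑ b : Fin n → Bool, P (fun i => if b i then y i else z i)) / 2 ^ n
      + (4 / 9) * (∑ b : Fin n → Bool, P (fun i => if b i then y i else -(z i))) / 2 ^ n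
      + (1 / 9) * P (fun i => -(y i))
    = (1 / 3) * ∑ i : Fin n, ∑ j : Fin n, ∑ k : Fin n,
        if i ≠ j ∧ i ≠ k ∧ j ≠ k then a i j k * y i * z j * z k else 0 := by
  classical
  have hswap : ∀ w : Fin n → ℝ,
      ∑ b : Fin n → Bool, P (fun t => if b t then y t else w t)
      = 2 ^ n / 8 * ∑ i : Fin n, ∑ j : Fin n, ∑ k : Fin n,
          if i ≠ j ∧ i ≠ k ∧ j ≠ k then
            a i j k * ((y i + w i) * (y j + w j) * (y k + w k)) else 0 := by
    intro w
    simp only [hP]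
    rw [Finset.sum_comm, Finset.mul_sum]
    refine Finset.sum_congr rfl fun i _ => ?_
    rw [Finset.sum_comm, Finset.mul_sum]
    refine Finset.sum_congr rfl fun j _ => ?_
    rw [Finset.sum_comm, Finset.mul_sum]
    refine Finset.sum_congr rfl fun k _ => ?_
    by_cases hc : i ≠ j ∧ i ≠ k ∧ j ≠ k
    · simp only [if_pos hc]
      have hr : ∀ b : Fin n → Bool,
          a i j k * (if b i then y i else w i) * (if b j then y j else w j)
            * (if b k then y k else w k)
          = a i j k * ((if b i then y i else w i) * (if b j then y j else w j)
            * (if b k then y k else w k)) := fun b => by ring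
      rw [Finset.sum_congr rfl (fun b _ => hr b), ← Finset.mul_sum,
        key_sum y w i j k hc.1 hc.2.1 hc.2.2]
      ring
    · simp [hc]
  have h2n : (2 : ℝ) ^ n ≠ 0 := by positivity
  rw [hswap z, hswap (fun t => -(z t)), hP]
  have e1 : (4 / 9 : ℝ) * (2 ^ n / 8 * ∑ i : Fin n, ∑ j : Fin n, ∑ k : Fin n,
        if i ≠ j ∧ i ≠ k ∧ j ≠ k then
          a i j k * ((y i + z i) * (y j + z j) * (y k + z k)) else 0) / 2 ^ n
      = (1 / 18) * ∑ i : Fin n, ∑ j : Fin n, ∑ k : Fin n,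
        if i ≠ j ∧ i ≠ k ∧ j ≠ k then
          a i j k * ((y i + z i) * (y j + z j) * (y k + z k)) else 0 := by
    field_simp; ring
  have e2 : (4 / 9 : ℝ) * (2 ^ n / 8 * ∑ i : Fin n, ∑ j : Fin n, ∑ k : Fin n,
        if i ≠ j ∧ i ≠ k ∧ j ≠ k then
          a i j k * ((y i + -(z i)) * (y j + -(z j)) * (y k + -(z k))) else 0) / 2 ^ n
      = (1 / 18) * ∑ i : Fin n, ∑ j : Fin n, ∑ k : Fin n,
        if i ≠ j ∧ i ≠ k ∧ j ≠ k then
          a i j k * ((y i + -(z i)) * (y j + -(z j)) * (y k + -(z k))) else 0 := by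
    field_simp; ring
  rw [e1, e2]
  have hmain : (1 / 18 : ℝ) * (∑ i : Fin n, ∑ j : Fin n, ∑ k : Fin n,
        if i ≠ j ∧ i ≠ k ∧ j ≠ k then
          a i j k * ((y i + z i) * (y j + z j) * (y k + z k)) else 0)
      + (1 / 18) * (∑ i : Fin n, ∑ j : Fin n, ∑ k : Fin n,
        if i ≠ j ∧ i ≠ k ∧ j ≠ k then
          a i j k * ((y i + -(z i)) * (y j + -(z j)) * (y k + -(z k))) else 0)
      + (1 / 9) * (∑ i : Fin n, ∑ j : Fin n, ∑ k : Fin n,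
        if i ≠ j ∧ i ≠ k ∧ j ≠ k then a i j k * -(y i) * -(y j) * -(y k) else 0)
      = (1 / 9) * (∑ i : Fin n, ∑ j : Fin n, ∑ k : Fin n,
          if i ≠ j ∧ i ≠ k ∧ j ≠ k then a i j k * y i * z j * z k else 0)
      + (1 / 9) * (∑ i : Fin n, ∑ j : Fin n, ∑ k : Fin n,
          if i ≠ j ∧ i ≠ k ∧ j ≠ k then a i j k * z i * y j * z k else 0)
      + (1 / 9) * (∑ i : Fin n, ∑ j : Fin n, ∑ k : Fin n,
          if i ≠ j ∧ i ≠ k ∧ j ≠ k then a i j k * z i * z j * y k else 0) := by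
    simp only [Finset.mul_sum, ← Finset.sum_add_distrib]
    refine Finset.sum_congr rfl fun i _ => ?_
    refine Finset.sum_congr rfl fun j _ => ?_
    refine Finset.sum_congr rfl fun k _ => ?_
    by_cases hc : i ≠ j ∧ i ≠ k ∧ j ≠ k
    · simp only [if_pos hc]; ring
    · simp [hc]
  have hU2 : (∑ i : Fin n, ∑ j : Fin n, ∑ k : Fin n,
        if i ≠ j ∧ i ≠ k ∧ j ≠ k then a i j k * z i * y j * z k else 0)
      = ∑ i : Fin n, ∑ j : Fin n, ∑ k : Fin n,
        if i ≠ j ∧ i ≠ k ∧ j ≠ k then a i j k * y i * z j * z k else 0 := by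
    rw [Finset.sum_comm]
    refine Finset.sum_congr rfl fun i _ => ?_
    refine Finset.sum_congr rfl fun j _ => ?_
    refine Finset.sum_congr rfl fun k _ => ?_
    by_cases hc : i ≠ j ∧ i ≠ k ∧ j ≠ k
    · rw [if_pos ⟨hc.1.symm, hc.2.2, hc.2.1⟩, if_pos hc, ← hsym1]
      ring
    · have h1 : ¬(j ≠ i ∧ j ≠ k ∧ i ≠ k) := fun h => hc ⟨h.1.symm, h.2.2, h.2.1⟩
      rw [if_neg h1, if_neg hc]
  have hU3 : (∑ i : Fin n, ∑ j : Fin n, ∑ k : Fin n,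
        if i ≠ j ∧ i ≠ k ∧ j ≠ k then a i j k * z i * z j * y k else 0)
      = ∑ i : Fin n, ∑ j : Fin n, ∑ k : Fin n,
        if i ≠ j ∧ i ≠ k ∧ j ≠ k then a i j k * y i * z j * z k else 0 := by
    calc (∑ i : Fin n, ∑ j : Fin n, ∑ k : Fin n,
        if i ≠ j ∧ i ≠ k ∧ j ≠ k then a i j k * z i * z j * y k else 0)
        = ∑ i : Fin n, ∑ k : Fin n, ∑ j : Fin n,
            if i ≠ j ∧ i ≠ k ∧ j ≠ k then a i j k * z i * z j * y k else 0 :=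
          Finset.sum_congr rfl fun i _ => Finset.sum_comm
      _ = ∑ k : Fin n, ∑ i : Fin n, ∑ j : Fin n,
            if i ≠ j ∧ i ≠ k ∧ j ≠ k then a i j k * z i * z j * y k else 0 :=
          Finset.sum_comm
      _ = ∑ k : Fin n, ∑ j : Fin n, ∑ i : Fin n,
            if i ≠ j ∧ i ≠ k ∧ j ≠ k then a i j k * z i * z j * y k else 0 :=
          Finset.sum_congr rfl fun k _ => Finset.sum_comm
      _ = ∑ i : Fin n, ∑ j : Fin n, ∑ k : Fin n,
            if i ≠ j ∧ i ≠ k ∧ j ≠ k then a i j k * y i * z j * z k else 0 := by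
          refine Finset.sum_congr rfl fun i _ => ?_
          refine Finset.sum_congr rfl fun j _ => ?_
          refine Finset.sum_congr rfl fun k _ => ?_
          by_cases hc : i ≠ j ∧ i ≠ k ∧ j ≠ k
          · rw [if_pos ⟨hc.2.2.symm, hc.2.1.symm, hc.1.symm⟩, if_pos hc]
            rw [show a k j i = a i j k from ((hsym1 k j i).trans (hsym2 j k i)).trans (hsym1 j i k)]
            ring
          · have h1 : ¬(k ≠ j ∧ k ≠ i ∧ j ≠ i) := fun h => hc ⟨h.2.2.symm, h.2.1.symm, h.1.symm⟩
            rw [if_neg h1, if_neg hc]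
  rw [hmain, hU2, hU3]
  ring
end

section
/- Let A₁,…,A_d be independent Bernoulli random variables each with success probability at least p, where 0 < p ≤ 1, and let N = A₁+⋯+A_d. Then E[√N] ≥ c·min(√(dp), dp) for some universal constant c > 0. -/
open Finset

private lemma sum_prod_bool {d : ℕ} (g : Fin d → Bool → ℝ) :
    ∑ ω : Fin d → Bool, ∏ i, g i (ω i) = ∏ i, (g i true + g i false) := by
  have h := Finset.sum_prod_piFinset (Finset.univ : Finset Bool) g
  simp only [Fintype.piFinset_univ] at h
  rw [h]
  exact Finset.prod_congr rfl (fun i _ => by simp [Fintype.sum_bool])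

private lemma expect_prod {d : ℕ} (q : Fin d → ℝ) (S : Finset (Fin d)) :
    ∑ ω : Fin d → Bool,
        (∏ k, if ω k then q k else 1 - q k) * (∏ k ∈ S, if ω k then (1:ℝ) else 0)
      = ∏ k ∈ S, q k := by
  have h1 : ∑ ω : Fin d → Bool,
        (∏ k, if ω k then q k else 1 - q k) * (∏ k ∈ S, if ω k then (1:ℝ) else 0)
      = ∑ ω : Fin d → Bool, ∏ k,
          ((if ω k then q k else 1 - q k) *
            (if k ∈ S then (if ω k then (1:ℝ) else 0) else 1)) := by
    refine Finset.sum_congr rfl (fun ω _ => ?_)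
    rw [Finset.prod_mul_distrib, Fintype.prod_ite_mem]
  rw [h1, sum_prod_bool (fun k b => (if b then q k else 1 - q k) *
      (if k ∈ S then (if b then (1:ℝ) else 0) else 1))]
  have h2 : ∀ k : Fin d,
      ((if (true : Bool) then q k else 1 - q k) *
          (if k ∈ S then (if (true : Bool) then (1:ℝ) else 0) else 1))
        + ((if (false : Bool) then q k else 1 - q k) *
          (if k ∈ S then (if (false : Bool) then (1:ℝ) else 0) else 1))
      = if k ∈ S then q k else 1 := by
    intro k; by_cases h : k ∈ S <;> simp [h]
  rw [Finset.prod_congr rfl (fun k _ => h2 k), Fintype.prod_ite_mem S q]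

private lemma expect_one {d : ℕ} (q : Fin d → ℝ) (i : Fin d) :
    ∑ ω : Fin d → Bool,
        (∏ k, if ω k then q k else 1 - q k) * (if ω i then (1:ℝ) else 0) = q i := by
  have := expect_prod q {i}
  simpa using this

private lemma expect_pair {d : ℕ} (q : Fin d → ℝ) (i j : Fin d) :
    ∑ ω : Fin d → Bool,
        (∏ k, if ω k then q k else 1 - q k) *
          ((if ω i then (1:ℝ) else 0) * (if ω j then (1:ℝ) else 0))
      = if i = j then q i else q i * q j := by
  by_cases h : i = j
  · subst h
    rw [if_pos rfl]
    have e : ∀ ω : Fin d → Bool,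
        (if ω i then (1:ℝ) else 0) * (if ω i then (1:ℝ) else 0)
          = if ω i then (1:ℝ) else 0 := by
      intro ω; by_cases hb : ω i <;> simp [hb]
    rw [Finset.sum_congr rfl (fun ω _ => by rw [e ω])]
    exact expect_one q i
  · rw [if_neg h]
    have := expect_prod q {i, j}
    rw [Finset.prod_pair h] at this
    have e : ∀ ω : Fin d → Bool,
        (∏ k ∈ ({i, j} : Finset (Fin d)), if ω k then (1:ℝ) else 0)
          = (if ω i then (1:ℝ) else 0) * (if ω j then (1:ℝ) else 0) :=
      fun ω => Finset.prod_pair h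
    rw [Finset.sum_congr rfl (fun ω _ => by rw [e ω])] at this
    exact this

private lemma card_filter_cast {d : ℕ} (ω : Fin d → Bool) :
    ((Finset.univ.filter (fun i => ω i = true)).card : ℝ)
      = ∑ i, (if ω i then (1:ℝ) else 0) := by
  rw [Finset.card_filter]
  push_cast
  exact Finset.sum_congr rfl (fun i _ => by by_cases h : ω i <;> simp [h])

private lemma expect_N {d : ℕ} (q : Fin d → ℝ) :
    ∑ ω : Fin d → Bool, (∏ k, if ω k then q k else 1 - q k) *
        ((Finset.univ.filter (fun i => ω i = true)).card : ℝ) = ∑ i, q i := by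
  calc ∑ ω : Fin d → Bool, (∏ k, if ω k then q k else 1 - q k) *
          ((Finset.univ.filter (fun i => ω i = true)).card : ℝ)
      = ∑ ω : Fin d → Bool, ∑ i, (∏ k, if ω k then q k else 1 - q k) *
          (if ω i then (1:ℝ) else 0) := by
        refine Finset.sum_congr rfl (fun ω _ => ?_)
        rw [card_filter_cast ω, Finset.mul_sum]
    _ = ∑ i, ∑ ω : Fin d → Bool, (∏ k, if ω k then q k else 1 - q k) *
          (if ω i then (1:ℝ) else 0) := Finset.sum_comm
    _ = ∑ i, q i := Finset.sum_congr rfl (fun i _ => expect_one q i)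

private lemma expect_Nsq {d : ℕ} (q : Fin d → ℝ) (hq0 : ∀ i, 0 ≤ q i) :
    (∑ ω : Fin d → Bool, (∏ k, if ω k then q k else 1 - q k) *
        (((Finset.univ.filter (fun i => ω i = true)).card : ℝ) *
          ((Finset.univ.filter (fun i => ω i = true)).card : ℝ)))
      ≤ (∑ i, q i) + (∑ i, q i) ^ 2 := by
  have step : (∑ ω : Fin d → Bool, (∏ k, if ω k then q k else 1 - q k) *
        (((Finset.univ.filter (fun i => ω i = true)).card : ℝ) *
          ((Finset.univ.filter (fun i => ω i = true)).card : ℝ)))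
      = ∑ i, ∑ j, (if i = j then q i else q i * q j) := by
    calc (∑ ω : Fin d → Bool, (∏ k, if ω k then q k else 1 - q k) *
            (((Finset.univ.filter (fun i => ω i = true)).card : ℝ) *
              ((Finset.univ.filter (fun i => ω i = true)).card : ℝ)))
        = ∑ ω : Fin d → Bool, ∑ i, ∑ j, (∏ k, if ω k then q k else 1 - q k) *
            ((if ω i then (1:ℝ) else 0) * (if ω j then (1:ℝ) else 0)) := by
          refine Finset.sum_congr rfl (fun ω _ => ?_)
          rw [card_filter_cast ω, Finset.sum_mul_sum]
          rw [Finset.mul_sum]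
          exact Finset.sum_congr rfl (fun i _ => by rw [Finset.mul_sum])
      _ = ∑ i, ∑ j, ∑ ω : Fin d → Bool, (∏ k, if ω k then q k else 1 - q k) *
            ((if ω i then (1:ℝ) else 0) * (if ω j then (1:ℝ) else 0)) := by
          rw [Finset.sum_comm]
          exact Finset.sum_congr rfl (fun i _ => Finset.sum_comm)
      _ = ∑ i, ∑ j, (if i = j then q i else q i * q j) :=
          Finset.sum_congr rfl (fun i _ => Finset.sum_congr rfl (fun j _ => expect_pair q i j))
  rw [step]
  have bound : ∀ i j : Fin d, (if i = j then q i else q i * q j)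
      ≤ (if i = j then q i else 0) + q i * q j := by
    intro i j
    by_cases h : i = j
    · subst h; simp [mul_nonneg (hq0 i) (hq0 i)]
    · simp [h]
  calc ∑ i, ∑ j, (if i = j then q i else q i * q j)
      ≤ ∑ i, ∑ j, ((if i = j then q i else 0) + q i * q j) :=
        Finset.sum_le_sum (fun i _ => Finset.sum_le_sum (fun j _ => bound i j))
    _ = (∑ i, q i) + (∑ i, q i) ^ 2 := by
        rw [Finset.sum_congr rfl (fun i (_ : i ∈ univ) => Finset.sum_add_distrib)]
        rw [Finset.sum_add_distrib]
        have hA : ∑ i : Fin d, ∑ j : Fin d, (if i = j then q i else (0:ℝ)) = ∑ i, q i :=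
          Finset.sum_congr rfl (fun i _ => by simp)
        have hB : ∑ i : Fin d, ∑ j : Fin d, q i * q j = (∑ i, q i) ^ 2 := by
          rw [sq, Finset.sum_mul_sum]
        rw [hA, hB]

private lemma core_ineq {Ω : Type*} [Fintype Ω] (B Nf : Ω → ℝ)
    (hB0 : ∀ ω, 0 ≤ B ω) (hN0 : ∀ ω, 0 ≤ Nf ω) (μ : ℝ) (hμ : 0 < μ)
    (hE1 : ∑ ω, B ω * Nf ω = μ)
    (hE2 : ∑ ω, B ω * (Nf ω * Nf ω) ≤ μ + μ ^ 2) :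
    μ / Real.sqrt (1 + μ) ≤ ∑ ω, B ω * Real.sqrt (Nf ω) := by
  set S1 := ∑ ω, B ω * Real.sqrt (Nf ω) with hS1def
  set S2 := ∑ ω, B ω * (Nf ω * Real.sqrt (Nf ω)) with hS2def
  have hS1 : 0 ≤ S1 := Finset.sum_nonneg fun ω _ => mul_nonneg (hB0 ω) (Real.sqrt_nonneg _)
  have hS2 : 0 ≤ S2 := Finset.sum_nonneg fun ω _ =>
    mul_nonneg (hB0 ω) (mul_nonneg (hN0 ω) (Real.sqrt_nonneg _))
  have hss : ∀ ω, Real.sqrt (Nf ω) * Real.sqrt (Nf ω) = Nf ω := fun ω => Real.mul_self_sqrt (hN0 ω)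
  have CS1 : μ ^ 2 ≤ S1 * S2 := by
    have h := Finset.sum_mul_sq_le_sq_mul_sq Finset.univ
      (fun ω => Real.sqrt (B ω * Real.sqrt (Nf ω)))
      (fun ω => Real.sqrt (B ω * (Nf ω * Real.sqrt (Nf ω))))
    have e1 : ∀ ω : Ω, Real.sqrt (B ω * Real.sqrt (Nf ω)) *
        Real.sqrt (B ω * (Nf ω * Real.sqrt (Nf ω))) = B ω * Nf ω := by
      intro ω
      rw [← Real.sqrt_mul (mul_nonneg (hB0 ω) (Real.sqrt_nonneg _))]
      rw [show B ω * Real.sqrt (Nf ω) * (B ω * (Nf ω * Real.sqrt (Nf ω))) = (B ω * Nf ω) ^ 2 from by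
        linear_combination (B ω ^ 2 * Nf ω) * hss ω]
      exact Real.sqrt_sq (mul_nonneg (hB0 ω) (hN0 ω))
    have e2 : ∀ ω : Ω, Real.sqrt (B ω * Real.sqrt (Nf ω)) ^ 2 = B ω * Real.sqrt (Nf ω) :=
      fun ω => Real.sq_sqrt (mul_nonneg (hB0 ω) (Real.sqrt_nonneg _))
    have e3 : ∀ ω : Ω, Real.sqrt (B ω * (Nf ω * Real.sqrt (Nf ω))) ^ 2
        = B ω * (Nf ω * Real.sqrt (Nf ω)) :=
      fun ω => Real.sq_sqrt (mul_nonneg (hB0 ω) (mul_nonneg (hN0 ω) (Real.sqrt_nonneg _)))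
    rw [Finset.sum_congr rfl (fun ω _ => e1 ω), Finset.sum_congr rfl (fun ω _ => e2 ω),
      Finset.sum_congr rfl (fun ω _ => e3 ω), hE1] at h
    exact h
  have CS2 : S2 ^ 2 ≤ μ * (μ + μ ^ 2) := by
    have h := Finset.sum_mul_sq_le_sq_mul_sq Finset.univ
      (fun ω => Real.sqrt (B ω * Nf ω))
      (fun ω => Real.sqrt (B ω * (Nf ω * Nf ω)))
    have e1 : ∀ ω : Ω, Real.sqrt (B ω * Nf ω) * Real.sqrt (B ω * (Nf ω * Nf ω))
        = B ω * (Nf ω * Real.sqrt (Nf ω)) := by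
      intro ω
      rw [← Real.sqrt_mul (mul_nonneg (hB0 ω) (hN0 ω))]
      rw [show B ω * Nf ω * (B ω * (Nf ω * Nf ω)) = (B ω * Nf ω) ^ 2 * Nf ω from by ring]
      rw [Real.sqrt_mul (sq_nonneg _), Real.sqrt_sq (mul_nonneg (hB0 ω) (hN0 ω))]
      ring
    have e2 : ∀ ω : Ω, Real.sqrt (B ω * Nf ω) ^ 2 = B ω * Nf ω :=
      fun ω => Real.sq_sqrt (mul_nonneg (hB0 ω) (hN0 ω))
    have e3 : ∀ ω : Ω, Real.sqrt (B ω * (Nf ω * Nf ω)) ^ 2 = B ω * (Nf ω * Nf ω) :=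
      fun ω => Real.sq_sqrt (mul_nonneg (hB0 ω) (mul_nonneg (hN0 ω) (hN0 ω)))
    rw [Finset.sum_congr rfl (fun ω _ => e1 ω), Finset.sum_congr rfl (fun ω _ => e2 ω),
      Finset.sum_congr rfl (fun ω _ => e3 ω), hE1] at h
    calc S2 ^ 2 ≤ μ * ∑ ω, B ω * (Nf ω * Nf ω) := h
      _ ≤ μ * (μ + μ ^ 2) := mul_le_mul_of_nonneg_left hE2 hμ.le
  have hsq : Real.sqrt (1 + μ) ^ 2 = 1 + μ := Real.sq_sqrt (by linarith)
  have hS2le : S2 ≤ μ * Real.sqrt (1 + μ) := by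
    nlinarith [Real.sqrt_nonneg (1 + μ), mul_nonneg hμ.le (Real.sqrt_nonneg (1 + μ))]
  have hsp : 0 < Real.sqrt (1 + μ) := Real.sqrt_pos.2 (by linarith)
  rw [div_le_iff₀ hsp]
  have h1 : μ ^ 2 ≤ S1 * (μ * Real.sqrt (1 + μ)) :=
    le_trans CS1 (mul_le_mul_of_nonneg_left hS2le hS1)
  nlinarith

theorem sqrt_sum_bernoulli_lower_bound :
    ∃ c : ℝ, 0 < c ∧
      ∀ (d : ℕ) (p : ℝ), 0 < p → p ≤ 1 →
        ∀ q : Fin d → ℝ, (∀ i, p ≤ q i ∧ q i ≤ 1) →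
          ∑ ω : Fin d → Bool,
              (∏ i : Fin d, if ω i then q i else 1 - q i) *
                Real.sqrt ((Finset.univ.filter (fun i => ω i = true)).card)
            ≥ c * min (Real.sqrt (d * p)) (d * p) := by
  refine ⟨1/2, by norm_num, ?_⟩
  intro d p hp hp1 q hq
  rcases Nat.eq_zero_or_pos d with hd | hd
  · subst hd
    simp
  have hq0 : ∀ i, 0 ≤ q i := fun i => le_trans hp.le (hq i).1
  have hB0 : ∀ ω : Fin d → Bool, 0 ≤ ∏ k, if ω k then q k else 1 - q k := by
    intro ω
    refine Finset.prod_nonneg (fun k _ => ?_)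
    by_cases h : ω k = true <;>
      simp [h, hq0 k, sub_nonneg, (hq k).2]
  set μ := ∑ i, q i with hμdef
  have hdp : 0 < (d : ℝ) * p := by
    have hd' : (0:ℝ) < d := by exact_mod_cast hd
    exact mul_pos hd' hp
  have hdpμ : (d : ℝ) * p ≤ μ := by
    have : (d : ℝ) * p = ∑ _i : Fin d, p := by
      rw [Finset.sum_const, Finset.card_univ, Fintype.card_fin, nsmul_eq_mul]
    rw [this]
    exact Finset.sum_le_sum (fun i _ => (hq i).1)
  have hμ : 0 < μ := lt_of_lt_of_le hdp hdpμ
  have key := core_ineq (fun ω : Fin d → Bool => ∏ k, if ω k then q k else 1 - q k)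
    (fun ω : Fin d → Bool => ((Finset.univ.filter (fun i => ω i = true)).card : ℝ))
    hB0 (fun ω => Nat.cast_nonneg _) μ hμ (expect_N q) (expect_Nsq q hq0)
  refine le_trans ?_ key
  -- (1/2) * min (√(dp)) (dp) ≤ μ / √(1+μ)
  have hsp : 0 < Real.sqrt (1 + μ) := Real.sqrt_pos.2 (by linarith)
  rw [le_div_iff₀ hsp]
  have hmin0 : 0 ≤ min (Real.sqrt ((d:ℝ) * p)) ((d:ℝ) * p) :=
    le_min (Real.sqrt_nonneg _) hdp.le
  have hkey : min (Real.sqrt ((d:ℝ) * p)) ((d:ℝ) * p) * Real.sqrt (1 + μ) ≤ 2 * μ := by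
    rcases le_total μ 1 with h1 | h1
    · have hM : min (Real.sqrt ((d:ℝ) * p)) ((d:ℝ) * p) ≤ μ :=
        le_trans (min_le_right _ _) hdpμ
      have h2 : Real.sqrt (1 + μ) ≤ 2 := by
        have : Real.sqrt (1 + μ) ≤ Real.sqrt 4 := Real.sqrt_le_sqrt (by linarith)
        have h4 : Real.sqrt 4 = 2 := by
          rw [show (4:ℝ) = 2 ^ 2 by norm_num, Real.sqrt_sq (by norm_num : (0:ℝ) ≤ 2)]
        linarith
      calc min (Real.sqrt ((d:ℝ) * p)) ((d:ℝ) * p) * Real.sqrt (1 + μ)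
          ≤ μ * 2 := mul_le_mul hM h2 (Real.sqrt_nonneg _) hμ.le
        _ = 2 * μ := by ring
    · have hM : min (Real.sqrt ((d:ℝ) * p)) ((d:ℝ) * p) ≤ Real.sqrt μ :=
        le_trans (min_le_left _ _) (Real.sqrt_le_sqrt hdpμ)
      calc min (Real.sqrt ((d:ℝ) * p)) ((d:ℝ) * p) * Real.sqrt (1 + μ)
          ≤ Real.sqrt μ * Real.sqrt (1 + μ) :=
            mul_le_mul_of_nonneg_right hM (Real.sqrt_nonneg _)
        _ = Real.sqrt (μ * (1 + μ)) := (Real.sqrt_mul hμ.le _).symm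
        _ ≤ Real.sqrt ((2 * μ) ^ 2) := Real.sqrt_le_sqrt (by nlinarith)
        _ = 2 * μ := Real.sqrt_sq (by linarith)
  linarith
end
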